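/- Let n ≥ 2, let c_1, …, c_n ∈ [0,1), let M ≥ 0, let i' ∈ {1,…,n} be such that c_{i'} = max{c_1,…,c_n}, and let i'' ∈ {1,…,n}\{i'} be such that c_{i''} = max{c_i : i ∈ {1,…,n}\{i'}}. Then the values ρ_{i'} = M·c_{i'}·(1 + c_{i''})/(1 − c_{i'}·c_{i''}) and ρ_i = M·c_i·(1 + c_{i'})/(1 − c_{i'}·c_{i''}) for i ∈ {1,…,n}\{i'} satisfy the system of n equations ρ_i = c_i·(M + max_{j∈{1,…,n}\{i}} ρ_j) for every i ∈ {1,…,n}. -/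

import Mathlib

/-!
Write `a = c i'`, `b = c i''` and `D = 1 - a b > 0`. Off `i'`, `ρ i = c i · M (1 + a) / D` is monotone
in `c i`, so `ρ i''` is the largest value off `i'`; and `ρ i'' ≤ ρ i'` because `b (1 + a) ≤ a (1 + b)`.
Hence the maximum over `j ≠ i` is `ρ i''` when `i = i'` and `ρ i'` otherwise, and the two kinds of
equations reduce to the identities `D + b (1 + a) = 1 + b` and `D + a (1 + b) = 1 + a`.
-/

namespace Finset

variable {ι α : Type*} [LinearOrder α]

theorem sup'_eq_of_forall_le {s : Finset ι} {f : ι → α} {k : ι} (hk : k ∈ s)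
    (h : ∀ j ∈ s, f j ≤ f k) (H : s.Nonempty) : s.sup' H f = f k :=
  le_antisymm (sup'_le H f h) (le_sup' f hk)

theorem sup'_erase_eq_of_top_two [Fintype ι] [DecidableEq ι] {f : ι → α} {k₁ k₂ : ι}
    (hne : k₂ ≠ k₁) (h₁ : ∀ j, f j ≤ f k₁) (h₂ : ∀ j, j ≠ k₁ → f j ≤ f k₂) (i : ι)
    (H : (univ.erase i).Nonempty) :
    (univ.erase i).sup' H f = if i = k₁ then f k₂ else f k₁ := by
  split_ifs with hi
  · subst hi
    exact sup'_eq_of_forall_le (mem_erase.2 ⟨hne, mem_univ _⟩)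
      (fun j hj => h₂ j (ne_of_mem_erase hj)) H
  · exact sup'_eq_of_forall_le (mem_erase.2 ⟨Ne.symm hi, mem_univ _⟩) (fun j _ => h₁ j) H

end Finset

/-- For `n ≥ 2`, `c_1, …, c_n ∈ [0,1)`, `M ≥ 0`, `i'` maximizing `c` and
`i'' ≠ i'` maximizing `c` over the remaining indices, the values
`ρ_{i'} = M c_{i'} (1 + c_{i''}) / (1 − c_{i'} c_{i''})` and
`ρ_i = M c_i (1 + c_{i'}) / (1 − c_{i'} c_{i''})` for `i ≠ i'`
satisfy the system `ρ_i = c_i (M + max_{j ≠ i} ρ_j)` for every `i`. -/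
theorem rho_solves_system
    {n : ℕ} (hn : 2 ≤ n) (c : Fin n → ℝ)
    (hc0 : ∀ i, 0 ≤ c i) (hc1 : ∀ i, c i < 1)
    (M : ℝ) (hM : 0 ≤ M)
    (i' i'' : Fin n) (hne : i'' ≠ i')
    (hi' : ∀ i, c i ≤ c i') (hi'' : ∀ i, i ≠ i' → c i ≤ c i'')
    (ρ : Fin n → ℝ)
    (hρ : ∀ i, ρ i = if i = i'
        then M * c i' * (1 + c i'') / (1 - c i' * c i'')
        else M * c i * (1 + c i') / (1 - c i' * c i'')) :
    ∀ i : Fin n, ρ i = c i * (M + (Finset.univ.erase i).sup'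
      (Finset.card_pos.mp (by
        rw [Finset.card_erase_of_mem (Finset.mem_univ i), Finset.card_univ,
          Fintype.card_fin]
        omega)) ρ) := by
  have hD : 0 < 1 - c i' * c i'' := by nlinarith [hc0 i', hc0 i'', hc1 i', hc1 i'']
  have h₂ : ∀ j, j ≠ i' → ρ j ≤ ρ i'' := by
    intro j hj
    rw [hρ j, hρ i'', if_neg hj, if_neg hne]
    gcongr
    · linarith [hc0 i']
    · exact hi'' j hj
  have h₂₁ : ρ i'' ≤ ρ i' := by
    rw [hρ i'', hρ i', if_neg hne, if_pos rfl, mul_assoc, mul_assoc]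
    gcongr M * ?_ / _
    nlinarith [hi' i'']
  have h₁ : ∀ j, ρ j ≤ ρ i' := fun j => by
    by_cases hj : j = i'
    · rw [hj]
    · exact (h₂ j hj).trans h₂₁
  intro i
  rw [Finset.sup'_erase_eq_of_top_two hne h₁ h₂]
  by_cases hi : i = i'
  · rw [if_pos hi, hρ i, hρ i'', if_pos hi, if_neg hne, hi]
    field_simp
    ring
  · rw [if_neg hi, hρ i, hρ i', if_neg hi, if_pos rfl]
    field_simp
    ring
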